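/- arXiv:1109.6580 — 2 statements merged into one kernel-verified Lean document; each statement's English description precedes it below -/
import Mathlib

section
/- Let n ≥ 1 be an odd integer, f : [a,b] → ℝ with f^{(n-1)} absolutely continuous on [a,b] and f^{(n)} ∈ L²[a,b]. Then for every θ ∈ [0,1], |I - F_n| ≤ (b-a)^{n+1/2}/(n!·2^n) · √([θ²n²(2n+1) - θ(4n²-1) + (2n-1)] / ((2n+1)(2n-1))) · √(σ(f^{(n)})), where σ(g) = ∫_a^b g(x)² dx - (1/(b-a))(∫_a^b g(x) dx)². -/
open MeasureTheory intervalIntegral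

/-- The Peano kernel `G_n` from the paper (first branch on `[a,(a+b)/2]`,
second branch on `((a+b)/2, b]`). -/
noncomputable def G (a b θ : ℝ) (n : ℕ) (x : ℝ) : ℝ :=
  if x ≤ (a + b) / 2 then
    (x - a) ^ (n - 1) / (n.factorial : ℝ) * (x - a - θ * n * (b - a) / 2)
  else
    (x - b) ^ (n - 1) / (n.factorial : ℝ) * (x - b + θ * n * (b - a) / 2)

/-- The quadrature functional `F_n`. -/
noncomputable def quadF (a b θ : ℝ) (n : ℕ) (f : ℝ → ℝ) : ℝ :=
  (b - a) * ((1 - θ) * f ((a + b) / 2) + θ * (f a + f b) / 2)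
    + ∑ i ∈ Finset.Icc 1 ((n - 1) / 2),
        (1 - θ * (2 * (i : ℝ) + 1)) * (b - a) ^ (2 * i + 1)
          / (((2 * i + 1).factorial : ℝ) * 2 ^ (2 * i)) * iteratedDeriv (2 * i) f ((a + b) / 2)

/-- `σ(g) = ∫ g² - (1/(b-a)) (∫ g)²`. -/
noncomputable def qsigma (a b : ℝ) (g : ℝ → ℝ) : ℝ :=
  (∫ x in a..b, (g x) ^ 2) - (1 / (b - a)) * (∫ x in a..b, g x) ^ 2

/-!
Integrating by parts `n` times against the Peano kernel `G`, whose restrictions to the two halves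
of `[a, b]` are towers of polynomial antiderivatives, gives `∫ G f⁽ⁿ⁾ = F_n - I`: the boundary
terms at the endpoints survive only for `f` itself, and those at the midpoint only for the even
derivatives. For odd `n` the kernel is odd under `x ↦ a + b - x`, so `∫ G = 0` and `f⁽ⁿ⁾` may be
replaced by `f⁽ⁿ⁾` minus its mean; Cauchy–Schwarz then bounds `|I - F_n|` by
`‖G‖₂ · √σ(f⁽ⁿ⁾)`, and `‖G‖₂` is computed explicitly.
-/

open Set
open scoped Nat

theorem AbsolutelyContinuousOnInterval.congr {X : Type*} [PseudoMetricSpace X] {f g : ℝ → X}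
    {a b : ℝ} (hf : AbsolutelyContinuousOnInterval f a b) (h : EqOn f g (uIcc a b)) :
    AbsolutelyContinuousOnInterval g a b := by
  refine hf.congr' ?_
  filter_upwards [Filter.mem_inf_of_right (Filter.mem_principal_self _)] with E hE
  refine Finset.sum_congr rfl fun i hi => ?_
  rw [h (hE.1 i hi).1, h (hE.1 i hi).2]

theorem absolutelyContinuousOnInterval_of_eq_add_integral {F g : ℝ → ℝ} {a b : ℝ} (hab : a ≤ b)
    (hg : IntervalIntegrable g volume a b) (hF : ∀ x ∈ Icc a b, F x = F a + ∫ t in a..x, g t) :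
    AbsolutelyContinuousOnInterval F a b := by
  refine ((contDiffOn_const (c := F a)).absolutelyContinuousOnInterval.add
    (hg.absolutelyContinuousOnInterval_intervalIntegral left_mem_uIcc)).congr fun x hx => ?_
  rw [uIcc_of_le hab] at hx
  exact (hF x hx).symm

theorem absolutelyContinuousOnInterval_iteratedDeriv {f : ℝ → ℝ} {a b : ℝ} {n : ℕ} (hab : a ≤ b)
    (hd : ∀ k < n - 1, ∀ x ∈ Icc a b,
      HasDerivAt (iteratedDeriv k f) (iteratedDeriv (k + 1) f x) x)
    (hint : IntervalIntegrable (iteratedDeriv n f) volume a b)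
    (hftc : ∀ x ∈ Icc a b,
      iteratedDeriv (n - 1) f x = iteratedDeriv (n - 1) f a + ∫ t in a..x, iteratedDeriv n f t) :
    ∀ k < n, AbsolutelyContinuousOnInterval (iteratedDeriv k f) a b := by
  intro k hk
  induction hkn : n - 1 - k generalizing k with
  | zero =>
    obtain rfl : k = n - 1 := by omega
    exact absolutelyContinuousOnInterval_of_eq_add_integral hab hint hftc
  | succ d ih =>
    have hint' := (ih (k + 1) (by omega) (by omega)).continuousOn.intervalIntegrable (μ := volume)
    refine absolutelyContinuousOnInterval_of_eq_add_integral hab hint' fun x hx => ?_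
    have hsub : uIcc a x ⊆ uIcc a b := uIcc_subset_uIcc_left (Icc_subset_uIcc hx)
    rw [integral_eq_sub_of_hasDerivAt (fun y hy => hd k (by omega) y ?_) (hint'.mono_set hsub)]
    · ring
    · rw [← uIcc_of_le hab]; exact hsub hy

theorem integral_eq_sum_add_integral_mul_iteratedDeriv {ψ : ℕ → ℝ → ℝ} (hψ₀ : ψ 0 = 1)
    (hψ : ∀ k x, HasDerivAt (ψ (k + 1)) (ψ k x) x) {f : ℝ → ℝ} {u v : ℝ} {n : ℕ}
    (hf : ∀ k < n, AbsolutelyContinuousOnInterval (iteratedDeriv k f) u v) :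
    ∫ x in u..v, f x
      = ∑ k ∈ Finset.range n, (-1) ^ k
          * (ψ (k + 1) v * iteratedDeriv k f v - ψ (k + 1) u * iteratedDeriv k f u)
        + (-1) ^ n * ∫ x in u..v, ψ n x * iteratedDeriv n f x := by
  induction n with
  | zero => simp [hψ₀]
  | succ n ih =>
    have hderiv : deriv (ψ (n + 1)) = ψ n := funext fun x => (hψ n x).deriv
    have hψC1 : ContDiff ℝ 1 (ψ (n + 1)) := by
      refine contDiff_one_iff_deriv.2 ⟨fun x => (hψ n x).differentiableAt, hderiv ▸ ?_⟩
      cases n with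
      | zero => exact hψ₀ ▸ continuous_const
      | succ n => exact continuous_iff_continuousAt.2 fun x => (hψ n x).continuousAt
    have ibp := hψC1.contDiffOn.absolutelyContinuousOnInterval.integral_mul_deriv_eq_deriv_mul
      (hf n n.lt_succ_self)
    rw [← iteratedDeriv_succ, hderiv] at ibp
    rw [ih fun k hk => hf k (hk.trans n.lt_succ_self), Finset.sum_range_succ, ibp]
    ring

theorem abs_integral_mul_le_sqrt_mul_sqrt {α : Type*} [MeasurableSpace α] {μ : Measure α}
    {F W : α → ℝ} (hF : MemLp F 2 μ) (hW : MemLp W 2 μ) :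
    |∫ x, F x * W x ∂μ| ≤ √(∫ x, F x ^ 2 ∂μ) * √(∫ x, W x ^ 2 ∂μ) := by
  have h2 : ENNReal.ofReal 2 = 2 := by norm_num
  have hsq (H : α → ℝ) : (∫ x, ‖H x‖ ^ (2 : ℝ) ∂μ) ^ (1 / 2 : ℝ) = √(∫ x, H x ^ 2 ∂μ) := by
    simp [Real.sqrt_eq_rpow]
  calc |∫ x, F x * W x ∂μ| ≤ ∫ x, ‖F x‖ * ‖W x‖ ∂μ := by
        simpa [norm_mul] using norm_integral_le_integral_norm (fun x => F x * W x)
    _ ≤ _ := integral_mul_norm_le_Lp_mul_Lq Real.HolderConjugate.two_two (h2 ▸ hF) (h2 ▸ hW)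
    _ = _ := by rw [hsq, hsq]

theorem integral_sub_average_sq {g : ℝ → ℝ} {a b : ℝ} (hab : a ≠ b)
    (hg : IntervalIntegrable g volume a b)
    (hg2 : IntervalIntegrable (fun x => g x ^ 2) volume a b) :
    ∫ x in a..b, (g x - (∫ x in a..b, g x) / (b - a)) ^ 2 = qsigma a b g := by
  set c := (∫ x in a..b, g x) / (b - a)
  have hexp : ∀ x, (g x - c) ^ 2 = (g x ^ 2 - 2 * c * g x) + c ^ 2 := fun x => by ring
  simp only [hexp]
  rw [integral_add (hg2.sub (hg.const_mul _)) intervalIntegrable_const,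
    integral_sub hg2 (hg.const_mul _), intervalIntegral.integral_const_mul,
    intervalIntegral.integral_const, qsigma, smul_eq_mul]
  have : b - a ≠ 0 := sub_ne_zero.2 hab.symm
  simp only [c]
  field_simp
  ring

theorem intervalIntegrable_and_integral_eq_add_of_eqOn {f fL fR : ℝ → ℝ} {p q r : ℝ}
    (hpq : p ≤ q) (hqr : q ≤ r) (hL : EqOn f fL (Ioc p q)) (hR : EqOn f fR (Ioc q r))
    (hfL : IntervalIntegrable fL volume p q) (hfR : IntervalIntegrable fR volume q r) :
    IntervalIntegrable f volume p r ∧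
      ∫ x in p..r, f x = (∫ x in p..q, fL x) + ∫ x in q..r, fR x := by
  have hL' : EqOn f fL (uIoc p q) := by rwa [uIoc_of_le hpq]
  have hR' : EqOn f fR (uIoc q r) := by rwa [uIoc_of_le hqr]
  have hf₁ : IntervalIntegrable f volume p q := hfL.congr hL'.symm
  have hf₂ : IntervalIntegrable f volume q r := hfR.congr hR'.symm
  refine ⟨hf₁.trans hf₂, ?_⟩
  rw [← integral_add_adjacent_intervals hf₁ hf₂, integral_congr_ae (.of_forall hL'),
    integral_congr_ae (.of_forall hR')]

theorem sum_range_two_mul_add_one_neg_one_pow_add_one_mul {R : Type*} [CommRing R] (w : ℕ → R)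
    (s : ℕ) :
    ∑ j ∈ Finset.range (2 * s + 1), ((-1) ^ j + 1) * w j
      = ∑ i ∈ Finset.range (s + 1), 2 * w (2 * i) := by
  induction s with
  | zero => norm_num
  | succ s ih =>
    rw [show 2 * (s + 1) + 1 = 2 * s + 1 + 1 + 1 by omega, Finset.sum_range_succ,
      Finset.sum_range_succ, ih, Finset.sum_range_succ _ (s + 1)]
    simp [pow_succ, pow_mul, one_add_one_eq_two, mul_add]

noncomputable def peanoPoly (ε : ℝ) : ℕ → ℝ → ℝ
  | 0, _ => 1
  | k + 1, t => t ^ (k + 1) / (k + 1)! - ε * t ^ k / k !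

namespace peanoPoly

variable (ε : ℝ)

theorem hasDerivAt_succ (k : ℕ) (t : ℝ) :
    HasDerivAt (peanoPoly ε (k + 1)) (peanoPoly ε k t) t := by
  show HasDerivAt (fun t => peanoPoly ε (k + 1) t) _ t
  cases k with
  | zero => simpa [peanoPoly] using (hasDerivAt_id t).sub_const ε
  | succ k =>
    refine (((hasDerivAt_pow (k + 2) t).div_const ((k + 2)! : ℝ)).sub
      (((hasDerivAt_pow (k + 1) t).const_mul ε).div_const ((k + 1)! : ℝ))).congr_deriv ?_
    simp only [peanoPoly, Nat.factorial_succ]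
    push_cast
    field_simp
    ring

@[fun_prop]
theorem continuous (k : ℕ) : Continuous (peanoPoly ε k) := by
  cases k with
  | zero => exact continuous_const
  | succ k => exact continuous_iff_continuousAt.2 fun t => (hasDerivAt_succ ε k t).continuousAt

theorem neg_neg (k : ℕ) (t : ℝ) : peanoPoly (-ε) k (-t) = (-1) ^ k * peanoPoly ε k t := by
  cases k with
  | zero => simp [peanoPoly]
  | succ k => simp only [peanoPoly, neg_pow t, pow_succ]; ring

theorem succ_zero (k : ℕ) : peanoPoly ε (k + 1) 0 = if k = 0 then -ε else 0 := by
  cases k <;> simp [peanoPoly]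

theorem neg_one_pow_mul_boundary_terms (h ca cm cb : ℝ) (j : ℕ) :
    (-1) ^ j * ((peanoPoly ε (j + 1) h * cm - peanoPoly ε (j + 1) 0 * ca)
      + (peanoPoly (-ε) (j + 1) 0 * cb - peanoPoly (-ε) (j + 1) (-h) * cm))
      = ((-1) ^ j + 1) * (peanoPoly ε (j + 1) h * cm) + if j = 0 then ε * (ca + cb) else 0 := by
  have hsq : ((-1 : ℝ) ^ j) ^ 2 = 1 := by rw [← pow_mul, pow_mul', neg_one_sq, one_pow]
  rw [succ_zero, succ_zero, neg_neg, pow_succ]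
  split_ifs with hj
  · subst hj; ring
  · linear_combination (peanoPoly ε (j + 1) h * cm) * hsq

theorem two_mul_two_mul_add_one (θ L : ℝ) (i : ℕ) :
    2 * peanoPoly (θ * (L / 2)) (2 * i + 1) (L / 2)
      = (1 - θ * (2 * i + 1)) * L ^ (2 * i + 1) / ((2 * i + 1)! * 2 ^ (2 * i)) := by
  simp only [peanoPoly, Nat.factorial_succ, div_pow]
  push_cast
  field_simp
  ring

theorem integral_sq (θ h : ℝ) {n : ℕ} (hn : 1 ≤ n) :
    ∫ t in 0..h, peanoPoly (θ * h) n t ^ 2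
      = h ^ (2 * n + 1) / (n ! : ℝ) ^ 2
        * ((θ ^ 2 * (n : ℝ) ^ 2 * (2 * n + 1) - θ * (4 * (n : ℝ) ^ 2 - 1) + (2 * n - 1))
          / ((2 * n + 1) * (2 * n - 1))) := by
  obtain ⟨k, rfl⟩ := Nat.exists_eq_add_of_le' hn
  have hexp : ∀ t, peanoPoly (θ * h) (k + 1) t ^ 2
      = ((k + 1)! : ℝ)⁻¹ ^ 2 * t ^ (2 * k + 2)
        - 2 * θ * h / ((k + 1)! * k !) * t ^ (2 * k + 1)
        + (θ * h / k !) ^ 2 * t ^ (2 * k) := by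
    intro t; simp only [peanoPoly]; ring
  have hint (c : ℝ) (j : ℕ) : IntervalIntegrable (fun t : ℝ => c * t ^ j) volume 0 h :=
    (continuous_const.mul (continuous_pow j)).intervalIntegrable _ _
  simp only [hexp]
  rw [integral_add ((hint _ _).sub (hint _ _)) (hint _ _), integral_sub (hint _ _) (hint _ _)]
  simp only [intervalIntegral.integral_const_mul, integral_pow, Nat.factorial_succ]
  rw [show (2 * ((k + 1 : ℕ) : ℝ) - 1) = 2 * k + 1 by push_cast; ring]
  push_cast
  field_simp
  ring

end peanoPoly

section Kernel

variable {a b θ : ℝ}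

theorem G_of_le {k : ℕ} {x : ℝ} (hx : x ≤ (a + b) / 2) :
    G a b θ (k + 1) x = peanoPoly (θ * ((b - a) / 2)) (k + 1) (x - a) := by
  simp only [G, if_pos hx, peanoPoly, Nat.add_sub_cancel, Nat.factorial_succ]
  push_cast
  field_simp
  ring

theorem G_of_lt {k : ℕ} {x : ℝ} (hx : (a + b) / 2 < x) :
    G a b θ (k + 1) x = peanoPoly (-(θ * ((b - a) / 2))) (k + 1) (x - b) := by
  simp only [G, if_neg hx.not_ge, peanoPoly, Nat.add_sub_cancel, Nat.factorial_succ]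
  push_cast
  field_simp
  ring

theorem intervalIntegrable_and_integral_comp_G (Φ : ℝ → ℝ → ℝ) {k : ℕ} (hab : a ≤ b)
    (hL : IntervalIntegrable (fun x => Φ x (peanoPoly (θ * ((b - a) / 2)) (k + 1) (x - a)))
      volume a ((a + b) / 2))
    (hR : IntervalIntegrable (fun x => Φ x (peanoPoly (-(θ * ((b - a) / 2))) (k + 1) (x - b)))
      volume ((a + b) / 2) b) :
    IntervalIntegrable (fun x => Φ x (G a b θ (k + 1) x)) volume a b ∧
      ∫ x in a..b, Φ x (G a b θ (k + 1) x)
        = (∫ x in a..(a + b) / 2, Φ x (peanoPoly (θ * ((b - a) / 2)) (k + 1) (x - a)))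
          + ∫ x in (a + b) / 2..b, Φ x (peanoPoly (-(θ * ((b - a) / 2))) (k + 1) (x - b)) :=
  intervalIntegrable_and_integral_eq_add_of_eqOn (by linarith) (by linarith)
    (fun x hx => congrArg (Φ x) (G_of_le hx.2)) (fun x hx => congrArg (Φ x) (G_of_lt hx.1)) hL hR

theorem intervalIntegrable_G_mul {k : ℕ} {g : ℝ → ℝ} (hab : a ≤ b)
    (hg : IntervalIntegrable g volume a b) :
    IntervalIntegrable (fun x => G a b θ (k + 1) x * g x) volume a b := by
  have hmid : (a + b) / 2 ∈ uIcc a b := by rw [uIcc_of_le hab]; constructor <;> linarith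
  exact (intervalIntegrable_and_integral_comp_G (fun x y => y * g x) hab
    ((hg.mono_set (uIcc_subset_uIcc_left hmid)).continuousOn_mul (by fun_prop))
    ((hg.mono_set (uIcc_subset_uIcc_right hmid)).continuousOn_mul (by fun_prop))).1

theorem intervalIntegrable_G {k : ℕ} (hab : a ≤ b) :
    IntervalIntegrable (G a b θ (k + 1)) volume a b := by
  simpa using
    intervalIntegrable_G_mul (θ := θ) (k := k) hab (intervalIntegrable_const (c := (1 : ℝ)))

theorem memLp_G {k : ℕ} (hab : a ≤ b) :
    MemLp (G a b θ (k + 1)) 2 (volume.restrict (Ioc a b)) := by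
  have hG := intervalIntegrable_G (θ := θ) (k := k) hab
  refine (memLp_two_iff_integrable_sq hG.1.aestronglyMeasurable).2 ?_
  simp only [sq]
  exact (intervalIntegrable_G_mul hab hG).1

theorem integral_left_half_comp_sub (q : ℝ → ℝ) :
    ∫ x in a..(a + b) / 2, q (x - a) = ∫ t in 0..(b - a) / 2, q t := by
  rw [integral_comp_sub_right, sub_self, show (a + b) / 2 - a = (b - a) / 2 by ring]

theorem integral_right_half_comp_sub (q : ℝ → ℝ) :
    ∫ x in (a + b) / 2..b, q (x - b) = ∫ t in 0..(b - a) / 2, q (-t) := by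
  rw [integral_comp_sub_right, integral_comp_neg, sub_self, neg_zero,
    show (a + b) / 2 - b = -((b - a) / 2) by ring]

theorem integral_G_eq_zero {n : ℕ} (hab : a ≤ b) (hn : Odd n) : ∫ x in a..b, G a b θ n x = 0 := by
  obtain ⟨s, rfl⟩ := hn
  rw [(intervalIntegrable_and_integral_comp_G (fun _ y => y) hab
    ((by fun_prop : Continuous _).intervalIntegrable _ _)
    ((by fun_prop : Continuous _).intervalIntegrable _ _)).2,
    integral_left_half_comp_sub, integral_right_half_comp_sub]
  simp only [peanoPoly.neg_neg, (odd_two_mul_add_one s).neg_one_pow, neg_one_mul,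
    intervalIntegral.integral_neg, add_neg_cancel]

theorem integral_G_mul_sub_const {n : ℕ} {g : ℝ → ℝ} (hab : a ≤ b) (hn : Odd n)
    (hg : IntervalIntegrable g volume a b) (c : ℝ) :
    ∫ x in a..b, G a b θ n x * (g x - c) = ∫ x in a..b, G a b θ n x * g x := by
  obtain ⟨s, rfl⟩ := hn
  simp only [mul_sub]
  rw [integral_sub (intervalIntegrable_G_mul hab hg) ((intervalIntegrable_G hab).mul_const c),
    intervalIntegral.integral_mul_const, integral_G_eq_zero hab ⟨s, rfl⟩, zero_mul, sub_zero]

theorem integral_G_sq {n : ℕ} (hab : a ≤ b) (hn : Odd n) :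
    ∫ x in a..b, G a b θ n x ^ 2
      = ((b - a) ^ n / (n ! * 2 ^ n)) ^ 2 * ((b - a)
        * ((θ ^ 2 * (n : ℝ) ^ 2 * (2 * n + 1) - θ * (4 * (n : ℝ) ^ 2 - 1) + (2 * n - 1))
          / ((2 * n + 1) * (2 * n - 1)))) := by
  obtain ⟨s, rfl⟩ := hn
  rw [(intervalIntegrable_and_integral_comp_G (fun _ y => y ^ 2) hab
    ((by fun_prop : Continuous _).intervalIntegrable _ _)
    ((by fun_prop : Continuous _).intervalIntegrable _ _)).2,
    integral_left_half_comp_sub (fun t => peanoPoly _ _ t ^ 2),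
    integral_right_half_comp_sub (fun t => peanoPoly _ _ t ^ 2)]
  simp only [peanoPoly.neg_neg, (odd_two_mul_add_one s).neg_one_pow, neg_one_mul, neg_sq]
  rw [peanoPoly.integral_sq _ _ (by omega)]
  -- the factor depending on `θ` is the same on both sides
  generalize (_ / ((2 * _ + 1) * (2 * _ - 1)) : ℝ) = M
  rw [div_pow (b - a) 2]
  field_simp
  ring

end Kernel

/-- `F_n` is the sum of the boundary terms of the expansions of `∫ f` over `[a, (a+b)/2]`
and `[(a+b)/2, b]` given by `integral_eq_sum_add_integral_mul_iteratedDeriv`. -/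
theorem quadF_eq_sum_boundary (a b θ : ℝ) (f : ℝ → ℝ) (s : ℕ) :
    quadF a b θ (2 * s + 1) f
      = ∑ k ∈ Finset.range (2 * s + 1), (-1) ^ k
          * ((peanoPoly (θ * ((b - a) / 2)) (k + 1) ((b - a) / 2) * iteratedDeriv k f ((a + b) / 2)
              - peanoPoly (θ * ((b - a) / 2)) (k + 1) 0 * iteratedDeriv k f a)
            + (peanoPoly (-(θ * ((b - a) / 2))) (k + 1) 0 * iteratedDeriv k f b
              - peanoPoly (-(θ * ((b - a) / 2))) (k + 1) (-((b - a) / 2))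
                * iteratedDeriv k f ((a + b) / 2))) := by
  simp only [peanoPoly.neg_one_pow_mul_boundary_terms, Finset.sum_add_distrib,
    sum_range_two_mul_add_one_neg_one_pow_add_one_mul, Finset.sum_ite_eq', Finset.mem_range,
    if_pos (Nat.succ_pos _), iteratedDeriv_zero]
  simp only [← mul_assoc, peanoPoly.two_mul_two_mul_add_one]
  rw [quadF, show (2 * s + 1 - 1) / 2 = s by omega, Finset.sum_range_succ',
    ← Finset.Ico_add_one_right_eq_Icc, ← Finset.sum_Ico_add' _ 0 s 1, ← Finset.range_eq_Ico]
  simp only [Nat.cast_add, Nat.cast_one, CharP.cast_eq_zero, mul_zero, zero_add, mul_one, pow_one,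
    Nat.factorial_one, pow_zero, div_one, iteratedDeriv_zero]
  ring

theorem integral_G_mul_iteratedDeriv {a b θ : ℝ} {n : ℕ} {f : ℝ → ℝ} (hab : a ≤ b) (hn : Odd n)
    (hAC : ∀ k < n, AbsolutelyContinuousOnInterval (iteratedDeriv k f) a b)
    (hint : IntervalIntegrable (iteratedDeriv n f) volume a b) :
    ∫ x in a..b, G a b θ n x * iteratedDeriv n f x = quadF a b θ n f - ∫ x in a..b, f x := by
  obtain ⟨s, rfl⟩ := hn
  have hmid : (a + b) / 2 ∈ uIcc a b := by rw [uIcc_of_le hab]; constructor <;> linarith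
  have hL := integral_eq_sum_add_integral_mul_iteratedDeriv
    (ψ := fun k x => peanoPoly (θ * ((b - a) / 2)) k (x - a)) (u := a) (v := (a + b) / 2) rfl
    (fun k x => (peanoPoly.hasDerivAt_succ _ k (x - a)).comp_sub_const x a)
    fun k hk => (hAC k hk).mono (uIcc_subset_uIcc_left hmid)
  have hR := integral_eq_sum_add_integral_mul_iteratedDeriv
    (ψ := fun k x => peanoPoly (-(θ * ((b - a) / 2))) k (x - b)) (u := (a + b) / 2) (v := b) rfl
    (fun k x => (peanoPoly.hasDerivAt_succ _ k (x - b)).comp_sub_const x b)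
    fun k hk => (hAC k hk).mono (uIcc_subset_uIcc_right hmid)
  simp only [sub_self, show (a + b) / 2 - a = (b - a) / 2 by ring,
    show (a + b) / 2 - b = -((b - a) / 2) by ring] at hL hR
  have hf : IntervalIntegrable f volume a b := by
    simpa using (hAC 0 (by omega)).continuousOn.intervalIntegrable (μ := volume)
  rw [(intervalIntegrable_and_integral_comp_G (θ := θ) (k := 2 * s)
      (fun x y => y * iteratedDeriv (2 * s + 1) f x) hab
      ((hint.mono_set (uIcc_subset_uIcc_left hmid)).continuousOn_mul (by fun_prop))
      ((hint.mono_set (uIcc_subset_uIcc_right hmid)).continuousOn_mul (by fun_prop))).2,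
    ← integral_add_adjacent_intervals (hf.mono_set (uIcc_subset_uIcc_left hmid))
      (hf.mono_set (uIcc_subset_uIcc_right hmid)),
    hL, hR, (odd_two_mul_add_one s).neg_one_pow, quadF_eq_sum_boundary]
  simp only [mul_add, Finset.sum_add_distrib]
  ring

theorem stmt14_general (a b θ : ℝ) (n : ℕ) (f : ℝ → ℝ)
    (hab : a < b) (hodd : Odd n)
    (hd : ∀ k < n - 1, ∀ x ∈ Set.Icc a b,
      HasDerivAt (iteratedDeriv k f) (iteratedDeriv (k + 1) f x) x)
    (hint : IntervalIntegrable (iteratedDeriv n f) volume a b)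
    (hftc : ∀ x ∈ Set.Icc a b,
      iteratedDeriv (n - 1) f x
        = iteratedDeriv (n - 1) f a + ∫ t in a..x, iteratedDeriv n f t)
    (hint2 : IntervalIntegrable (fun x => (iteratedDeriv n f x) ^ 2) volume a b) :
    |(∫ x in a..b, f x) - quadF a b θ n f|
      ≤ (b - a) ^ n * Real.sqrt (b - a) / ((n.factorial : ℝ) * 2 ^ n)
        * Real.sqrt ((θ ^ 2 * (n : ℝ) ^ 2 * (2 * (n : ℝ) + 1) - θ * (4 * (n : ℝ) ^ 2 - 1)
            + (2 * (n : ℝ) - 1)) / ((2 * (n : ℝ) + 1) * (2 * (n : ℝ) - 1)))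
        * Real.sqrt (qsigma a b (iteratedDeriv n f)) := by
  have hAC := absolutelyContinuousOnInterval_iteratedDeriv hab.le hd hint hftc
  obtain ⟨s, rfl⟩ := hodd
  set c := (∫ x in a..b, iteratedDeriv (2 * s + 1) f x) / (b - a)
  have hCS := abs_integral_mul_le_sqrt_mul_sqrt (memLp_G (θ := θ) (k := 2 * s) hab.le)
    (((memLp_two_iff_integrable_sq hint.1.aestronglyMeasurable).2 hint2.1).sub (memLp_const c))
  simp only [← integral_of_le hab.le, Pi.sub_apply] at hCS
  calc |(∫ x in a..b, f x) - quadF a b θ (2 * s + 1) f|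
      = |∫ x in a..b, G a b θ (2 * s + 1) x * (iteratedDeriv (2 * s + 1) f x - c)| := by
        rw [integral_G_mul_sub_const hab.le ⟨s, rfl⟩ hint,
          integral_G_mul_iteratedDeriv hab.le ⟨s, rfl⟩ hAC hint, abs_sub_comm]
    _ ≤ _ := hCS
    _ = _ := by
      rw [integral_G_sq hab.le ⟨s, rfl⟩, integral_sub_average_sq hab.ne hint hint2,
        Real.sqrt_mul (sq_nonneg _), Real.sqrt_sq (by positivity),
        Real.sqrt_mul (sub_nonneg.2 hab.le)]
      ring

theorem stmt14 (a b θ : ℝ) (n : ℕ) (f : ℝ → ℝ)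
    (hab : a < b) (hθ : θ ∈ Set.Icc (0 : ℝ) 1) (hn : 1 ≤ n) (hodd : Odd n)
    (hd : ∀ k < n - 1, ∀ x ∈ Set.Icc a b,
      HasDerivAt (iteratedDeriv k f) (iteratedDeriv (k + 1) f x) x)
    (hcont : ContinuousOn (iteratedDeriv (n - 1) f) (Set.Icc a b))
    (hint : IntervalIntegrable (iteratedDeriv n f) volume a b)
    (hftc : ∀ x ∈ Set.Icc a b,
      iteratedDeriv (n - 1) f x
        = iteratedDeriv (n - 1) f a + ∫ t in a..x, iteratedDeriv n f t)
    (hint2 : IntervalIntegrable (fun x => (iteratedDeriv n f x) ^ 2) volume a b) :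
    |(∫ x in a..b, f x) - quadF a b θ n f|
      ≤ (b - a) ^ n * Real.sqrt (b - a) / ((n.factorial : ℝ) * 2 ^ n)
        * Real.sqrt ((θ ^ 2 * (n : ℝ) ^ 2 * (2 * (n : ℝ) + 1) - θ * (4 * (n : ℝ) ^ 2 - 1)
            + (2 * (n : ℝ) - 1)) / ((2 * (n : ℝ) + 1) * (2 * (n : ℝ) - 1)))
        * Real.sqrt (qsigma a b (iteratedDeriv n f)) :=
  stmt14_general a b θ n f hab hodd hd hint hftc hint2
end

section
/- Let n > 1 be an integer and f : [a,b] → ℝ with f^{(n-1)} absolutely continuous on [a,b] and f^{(n)} ∈ L¹[a,b]. Then the averaged midpoint-trapezoid quadrature error satisfies |∫_a^b f(x) dx - (b-a)/4 · [f(a) + 2 f((a+b)/2) + f(b)] + Σ_{i=1}^{⌊(n-1)/2⌋} (2i-1)(b-a)^{2i+1}/((2i+1)!·2^{2i+1}) · f^{(2i)}((a+b)/2)| ≤ ‖f^{(n)}‖₁ · K, where K = (n-2)(b-a)^n/(n!·2^{n+1}) if n ≥ 3, and K = (b-a)²/32 if n = 2, with ‖f^{(n)}‖₁ = ∫_a^b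 |f^{(n)}(x)| dx. -/
/-
Let `c` be the midpoint and `r = (b - a)/4`. The polynomials `Q₀ = 1`,
`Q_j(t) = t^j/j! - r t^(j-1)/(j-1)!` satisfy `Q_{j+1}' = Q_j`, so repeated integration by parts
against `Q_j(x - a)` on `[a, c]` and against its mirror image on `[c, b]` turns `∫ f` into
`±∫ Q_n f^(n)` plus boundary terms. At `a` and `b` these survive only at the first step, giving
the trapezoid part; at `c` the two halves cancel in odd order and leave the correction term in
`f^(2i)(c)` in even order `2i`. The error is thus at most `‖f^(n)‖₁ sup |Q_n|` over `[0, 2r]`, and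
`Q_n(t) = t^(n-1) (t - n r)/n!` has its largest modulus there at `t = 2r` when `n ≥ 3`, at `t = r`
when `n = 2`. Only the last integration by parts involves `f^(n-1)`, which is merely absolutely
continuous.
-/

open MeasureTheory intervalIntegral

open Set
open scoped Nat

theorem integral_mul_eq_deriv_mul_of_eq_add_integral {U u v g : ℝ → ℝ} {α γ : ℝ}
    (hU : ∀ x, HasDerivAt U (u x) x) (hu : Continuous u)
    (hg : IntervalIntegrable g volume α γ)
    (hv : ∀ x ∈ uIcc α γ, v x = v α + ∫ t in α..x, g t) :
    ∫ x in α..γ, U x * g x = U γ * v γ - U α * v α - ∫ x in α..γ, u x * v x := by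
  set V : ℝ → ℝ := fun x ↦ v α + ∫ t in α..x, g t with hVdef
  have hV : AbsolutelyContinuousOnInterval V α γ :=
    (contDiffOn_const (c := v α)).absolutelyContinuousOnInterval.add
      (hg.absolutelyContinuousOnInterval_intervalIntegral left_mem_uIcc)
  have hderivU : deriv U = u := funext fun x ↦ (hU x).deriv
  have hUac : AbsolutelyContinuousOnInterval U α γ :=
    (contDiff_one_iff_deriv.2 ⟨fun x ↦ (hU x).differentiableAt, hderivU ▸ hu⟩).contDiffOn
      |>.absolutelyContinuousOnInterval
  have hderivV : ∀ᵐ x, x ∈ uIoc α γ → U x * g x = U x * deriv V x := by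
    filter_upwards [hg.ae_hasDerivAt_integral] with x hx hxI
    rw [((hx (uIoc_subset_uIcc hxI) α left_mem_uIcc).const_add (v α)).deriv]
  have hvV : EqOn (fun x ↦ u x * V x) (fun x ↦ u x * v x) (uIcc α γ) := fun x hx ↦ by
    simp only [hVdef, ← hv x hx]
  rw [integral_congr_ae hderivV, hUac.integral_mul_deriv_eq_deriv_mul hV, hderivU,
    integral_congr hvV]
  simp [hVdef, ← hv γ right_mem_uIcc]

theorem IntervalIntegrable.mono_set_Icc {g : ℝ → ℝ} {a b x y : ℝ}
    (hg : IntervalIntegrable g volume a b) (hx : x ∈ Icc a b) (hy : y ∈ Icc a b) :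
    IntervalIntegrable g volume x y :=
  hg.mono_set (uIcc_subset_uIcc (Icc_subset_uIcc hx) (Icc_subset_uIcc hy))

theorem abs_integral_mul_le_mul_integral_abs {w g : ℝ → ℝ} {α γ K : ℝ} (hαγ : α ≤ γ)
    (hw : ContinuousOn w (Icc α γ)) (hg : IntervalIntegrable g volume α γ)
    (hK : ∀ x ∈ Icc α γ, |w x| ≤ K) :
    |∫ x in α..γ, w x * g x| ≤ K * ∫ x in α..γ, |g x| := by
  rw [← intervalIntegral.integral_const_mul]
  refine (abs_integral_le_integral_abs hαγ).trans <| integral_mono_on hαγ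
    (hg.continuousOn_mul (by rwa [uIcc_of_le hαγ])).abs (hg.abs.const_mul K) fun x hx ↦ ?_
  rw [abs_mul]
  exact mul_le_mul_of_nonneg_right (hK x hx) (abs_nonneg _)

-- For `j ≥ 1`, `peanoKernel ((b - a) / 4) j (x - a)` and `peanoKernel (-((b - a) / 4)) j (x - b)`
-- are the two branches of the paper's kernel `G a b (1 / 2) j x`.
noncomputable def peanoKernel (ρ : ℝ) : ℕ → ℝ → ℝ
  | 0, _ => 1
  | j + 1, t => t ^ (j + 1) / (j + 1)! - ρ * (t ^ j / j !)

theorem hasDerivAt_pow_succ_div_factorial (j : ℕ) (t : ℝ) :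
    HasDerivAt (fun t : ℝ ↦ t ^ (j + 1) / (j + 1)!) (t ^ j / j !) t := by
  refine ((hasDerivAt_pow (j + 1) t).div_const ((j + 1)! : ℝ)).congr_deriv ?_
  rw [Nat.factorial_succ, Nat.add_sub_cancel]
  push_cast
  field_simp

theorem hasDerivAt_peanoKernel_succ (ρ : ℝ) (j : ℕ) (t : ℝ) :
    HasDerivAt (peanoKernel ρ (j + 1)) (peanoKernel ρ j t) t := by
  cases j with
  | zero =>
    show HasDerivAt (fun t ↦ t ^ 1 / (1 : ℕ)! - ρ * (t ^ 0 / (0 : ℕ)!)) 1 t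
    simpa using (hasDerivAt_id t).sub_const ρ
  | succ j =>
    exact (hasDerivAt_pow_succ_div_factorial (j + 1) t).sub
      ((hasDerivAt_pow_succ_div_factorial j t).const_mul ρ)

theorem continuous_peanoKernel (ρ : ℝ) (j : ℕ) : Continuous (peanoKernel ρ j) := by
  cases j <;> unfold peanoKernel <;> fun_prop

theorem peanoKernel_succ_zero (ρ : ℝ) {j : ℕ} (hj : j ≠ 0) : peanoKernel ρ (j + 1) 0 = 0 := by
  simp [peanoKernel, hj]

theorem peanoKernel_neg_neg (ρ t : ℝ) (j : ℕ) :
    peanoKernel (-ρ) j (-t) = (-1) ^ j * peanoKernel ρ j t := by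
  cases j with
  | zero => simp [peanoKernel]
  | succ j =>
    simp only [peanoKernel, neg_pow t]
    ring

theorem abs_peanoKernel_two_le {ρ t : ℝ} (ht : t ∈ Icc 0 (2 * ρ)) :
    |peanoKernel ρ 2 t| ≤ ρ ^ 2 / 2 := by
  have h : peanoKernel ρ 2 t = t * (t - 2 * ρ) / 2 := by
    simp only [peanoKernel, Nat.factorial]
    ring
  rw [h, abs_le]
  constructor <;> nlinarith [sq_nonneg (t - ρ), ht.1, ht.2]

theorem abs_peanoKernel_le {ρ t : ℝ} {n : ℕ} (hn : 3 ≤ n) (ht : t ∈ Icc 0 (2 * ρ)) :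
    |peanoKernel ρ n t| ≤ (n - 2) * (2 * ρ) ^ n / (2 * n !) := by
  obtain ⟨p, rfl⟩ : ∃ p, n = p + 3 := ⟨n - 3, by omega⟩
  obtain ⟨ht0, htρ⟩ := ht
  set h := 2 * ρ with hh
  -- `t ↦ t^(p+2) ((p+3) h - 2t)` increases on `[0, h]`; this is its value at `h`.
  have hmax : t ^ (p + 2) * ((p + 3) * h - 2 * t) ≤ (p + 1) * h ^ (p + 3) := by
    have hpow : t ^ p ≤ h ^ p := pow_le_pow_left₀ ht0 htρ p
    have hh0 : 0 ≤ h := ht0.trans htρ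
    have hht : 0 ≤ h - t := sub_nonneg.2 htρ
    have h1 : 0 ≤ ((p : ℝ) + 1) * h ^ 3 * (h ^ p - t ^ p) :=
      mul_nonneg (by positivity) (sub_nonneg.2 hpow)
    have h2 : 0 ≤ (p : ℝ) * h * (t ^ p * ((h - t) * (h + t))) := by positivity
    have h3 : 0 ≤ t ^ p * ((h - t) ^ 2 * (h + 2 * t)) := by positivity
    linear_combination h1 + h2 + h3
  have hkernel :
      peanoKernel ρ (p + 3) t = -(t ^ (p + 2) * ((p + 3) * h - 2 * t)) / (2 * (p + 3)!) := by
    simp only [peanoKernel, hh]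
    rw [Nat.factorial_succ (p + 2)]
    push_cast
    field_simp
    ring
  have hnonneg : 0 ≤ t ^ (p + 2) * ((p + 3) * h - 2 * t) :=
    mul_nonneg (pow_nonneg ht0 _) (by nlinarith [ht0.trans htρ, (p.cast_nonneg : (0 : ℝ) ≤ p)])
  rw [hkernel, abs_div, abs_neg, abs_of_nonneg hnonneg, abs_of_pos (by positivity)]
  calc t ^ (p + 2) * ((p + 3) * h - 2 * t) / (2 * (p + 3)!)
      ≤ (p + 1) * h ^ (p + 3) / (2 * (p + 3)!) := by gcongr
    _ = ((p + 3 : ℕ) - 2) * h ^ (p + 3) / (2 * (p + 3)!) := by push_cast; ring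

noncomputable def quadratureError (a b : ℝ) (n : ℕ) (f : ℝ → ℝ) : ℝ :=
  (∫ x in a..b, f x)
    - (b - a) / 4 * (f a + 2 * f ((a + b) / 2) + f b)
    + ∑ i ∈ Finset.Icc 1 ((n - 1) / 2),
        (2 * (i : ℝ) - 1) * (b - a) ^ (2 * i + 1)
          / (((2 * i + 1).factorial : ℝ) * 2 ^ (2 * i + 1))
          * iteratedDeriv (2 * i) f ((a + b) / 2)

theorem quadratureError_succ (a b : ℝ) (f : ℝ → ℝ) {k : ℕ} (hk : k ≠ 0) :
    quadratureError a b (k + 1) f = quadratureError a b k f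
      - (1 + (-1) ^ k) * peanoKernel ((b - a) / 4) (k + 1) ((b - a) / 2)
        * iteratedDeriv k f ((a + b) / 2) := by
  obtain ⟨i, rfl | rfl⟩ := Nat.even_or_odd' k
  · obtain ⟨m, rfl⟩ : ∃ m, i = m + 1 := ⟨i - 1, by omega⟩
    simp only [quadratureError, peanoKernel, div_pow]
    rw [show (2 * (m + 1) + 1 - 1) / 2 = m + 1 by omega,
      show (2 * (m + 1) - 1) / 2 = m by omega, Finset.sum_Icc_succ_top (by omega),
      Even.neg_one_pow ⟨m + 1, by ring⟩, Nat.factorial_succ (2 * (m + 1))]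
    push_cast
    field_simp
    ring
  · simp only [quadratureError]
    rw [show (2 * i + 1 + 1 - 1) / 2 = i by omega, show (2 * i + 1 - 1) / 2 = i by omega,
      Odd.neg_one_pow ⟨i, rfl⟩]
    ring

noncomputable def peanoIntegral (a b : ℝ) (j : ℕ) (f : ℝ → ℝ) : ℝ :=
  (∫ x in a..(a + b) / 2, peanoKernel ((b - a) / 4) j (x - a) * iteratedDeriv j f x) +
    ∫ x in (a + b) / 2..b, peanoKernel (-((b - a) / 4)) j (x - b) * iteratedDeriv j f x

section PeanoIdentity

variable {a b : ℝ} {n : ℕ} {f : ℝ → ℝ}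

theorem intervalIntegrable_iteratedDeriv (hab : a ≤ b)
    (hd : ∀ k < n - 1, ∀ x ∈ Icc a b,
      HasDerivAt (iteratedDeriv k f) (iteratedDeriv (k + 1) f x) x)
    (hcont : ContinuousOn (iteratedDeriv (n - 1) f) (Icc a b))
    (hint : IntervalIntegrable (iteratedDeriv n f) volume a b) :
    ∀ k ≤ n, IntervalIntegrable (iteratedDeriv k f) volume a b := by
  intro k hk
  rcases hk.eq_or_lt with rfl | hk
  · exact hint
  refine ContinuousOn.intervalIntegrable_of_Icc hab ?_
  rcases (Nat.le_sub_one_of_lt hk).eq_or_lt with rfl | hk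
  · exact hcont
  · exact fun x hx ↦ (hd k hk x hx).continuousAt.continuousWithinAt

theorem iteratedDeriv_eq_add_integral
    (hd : ∀ k < n - 1, ∀ x ∈ Icc a b,
      HasDerivAt (iteratedDeriv k f) (iteratedDeriv (k + 1) f x) x)
    (hint : ∀ k ≤ n, IntervalIntegrable (iteratedDeriv k f) volume a b)
    (hftc : ∀ x ∈ Icc a b,
      iteratedDeriv (n - 1) f x = iteratedDeriv (n - 1) f a + ∫ t in a..x, iteratedDeriv n f t) :
    ∀ k < n, ∀ x ∈ Icc a b, ∀ y ∈ Icc a b,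
      iteratedDeriv k f y = iteratedDeriv k f x + ∫ t in x..y, iteratedDeriv (k + 1) f t := by
  intro k hk x hx y hy
  by_cases hk' : k < n - 1
  · rw [integral_eq_sub_of_hasDerivAt
      (fun z hz ↦ hd k hk' z (uIcc_subset_Icc hx hy hz)) ((hint _ hk).mono_set_Icc hx hy)]
    ring
  · obtain rfl : n = k + 1 := by omega
    have ha : a ∈ Icc a b := ⟨le_rfl, hx.1.trans hx.2⟩
    rw [Nat.add_sub_cancel] at hftc
    rw [hftc y hy, hftc x hx, ← integral_add_adjacent_intervals
      ((hint _ le_rfl).mono_set_Icc ha hx) ((hint _ le_rfl).mono_set_Icc hx hy)]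
    ring

theorem integral_peanoKernel_succ_mul
    (hint : ∀ k ≤ n, IntervalIntegrable (iteratedDeriv k f) volume a b)
    (hftc : ∀ k < n, ∀ x ∈ Icc a b, ∀ y ∈ Icc a b,
      iteratedDeriv k f y = iteratedDeriv k f x + ∫ t in x..y, iteratedDeriv (k + 1) f t)
    {j : ℕ} (hj : j < n) (ρ β : ℝ) {α γ : ℝ} (hα : α ∈ Icc a b) (hγ : γ ∈ Icc a b) :
    ∫ x in α..γ, peanoKernel ρ (j + 1) (x - β) * iteratedDeriv (j + 1) f x
      = peanoKernel ρ (j + 1) (γ - β) * iteratedDeriv j f γ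
        - peanoKernel ρ (j + 1) (α - β) * iteratedDeriv j f α
        - ∫ x in α..γ, peanoKernel ρ j (x - β) * iteratedDeriv j f x :=
  integral_mul_eq_deriv_mul_of_eq_add_integral
    (fun x ↦ (hasDerivAt_peanoKernel_succ ρ j (x - β)).comp_sub_const x β)
    ((continuous_peanoKernel ρ j).comp (continuous_sub_right β))
    ((hint (j + 1) hj).mono_set_Icc hα hγ)
    (fun x hx ↦ hftc j hj α hα x (uIcc_subset_Icc hα hγ hx))

theorem peanoIntegral_succ (hab : a ≤ b)
    (hint : ∀ k ≤ n, IntervalIntegrable (iteratedDeriv k f) volume a b)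
    (hftc : ∀ k < n, ∀ x ∈ Icc a b, ∀ y ∈ Icc a b,
      iteratedDeriv k f y = iteratedDeriv k f x + ∫ t in x..y, iteratedDeriv (k + 1) f t)
    {j : ℕ} (hj : j < n) :
    peanoIntegral a b (j + 1) f
      = (1 - (-1) ^ (j + 1)) * peanoKernel ((b - a) / 4) (j + 1) ((b - a) / 2)
          * iteratedDeriv j f ((a + b) / 2)
        - peanoKernel ((b - a) / 4) (j + 1) 0 * iteratedDeriv j f a
        + peanoKernel (-((b - a) / 4)) (j + 1) 0 * iteratedDeriv j f b
        - peanoIntegral a b j f := by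
  have ha : a ∈ Icc a b := ⟨le_rfl, hab⟩
  have hb : b ∈ Icc a b := ⟨hab, le_rfl⟩
  have hc : (a + b) / 2 ∈ Icc a b := ⟨by linarith, by linarith⟩
  have hneg := peanoKernel_neg_neg ((b - a) / 4) ((b - a) / 2) (j + 1)
  rw [show -((b - a) / 2) = (a + b) / 2 - b by ring] at hneg
  rw [peanoIntegral, peanoIntegral, integral_peanoKernel_succ_mul hint hftc hj _ _ ha hc,
    integral_peanoKernel_succ_mul hint hftc hj _ _ hc hb, hneg, sub_self, sub_self,
    show (a + b) / 2 - a = (b - a) / 2 by ring]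
  ring

theorem quadratureError_eq_peanoIntegral (hab : a ≤ b)
    (hint : ∀ k ≤ n, IntervalIntegrable (iteratedDeriv k f) volume a b)
    (hftc : ∀ k < n, ∀ x ∈ Icc a b, ∀ y ∈ Icc a b,
      iteratedDeriv k f y = iteratedDeriv k f x + ∫ t in x..y, iteratedDeriv (k + 1) f t)
    {j : ℕ} (hj : 1 ≤ j) (hjn : j ≤ n) :
    quadratureError a b j f = (-1) ^ j * peanoIntegral a b j f := by
  induction j, hj using Nat.le_induction with
  | base =>
    have hsplit : peanoIntegral a b 0 f = ∫ x in a..b, f x := by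
      simp only [peanoIntegral, peanoKernel, one_mul, iteratedDeriv_zero]
      exact integral_add_adjacent_intervals
        ((hint 0 (by omega)).mono_set_Icc ⟨le_rfl, hab⟩ ⟨by linarith, by linarith⟩)
        ((hint 0 (by omega)).mono_set_Icc ⟨by linarith, by linarith⟩ ⟨hab, le_rfl⟩)
    rw [peanoIntegral_succ hab hint hftc hjn, hsplit]
    simp only [quadratureError, Nat.sub_self, Nat.zero_div, Finset.Icc_eq_empty_of_lt one_pos,
      Finset.sum_empty, peanoKernel, Nat.factorial, iteratedDeriv_zero]
    ring
  | succ j hj ih =>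
    have hsq : ((-1 : ℝ) ^ j) ^ 2 = 1 := by rw [← pow_mul, mul_comm, pow_mul, neg_one_sq, one_pow]
    rw [quadratureError_succ a b f (by omega), ih (by omega),
      peanoIntegral_succ hab hint hftc hjn, peanoKernel_succ_zero _ (by omega),
      peanoKernel_succ_zero _ (by omega)]
    linear_combination peanoKernel ((b - a) / 4) (j + 1) ((b - a) / 2)
      * iteratedDeriv j f ((a + b) / 2) * hsq

theorem abs_quadratureError_le (hab : a ≤ b) (hn : 1 ≤ n)
    (hint : ∀ k ≤ n, IntervalIntegrable (iteratedDeriv k f) volume a b)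
    (hftc : ∀ k < n, ∀ x ∈ Icc a b, ∀ y ∈ Icc a b,
      iteratedDeriv k f y = iteratedDeriv k f x + ∫ t in x..y, iteratedDeriv (k + 1) f t)
    {K : ℝ} (hK : ∀ t ∈ Icc 0 ((b - a) / 2), |peanoKernel ((b - a) / 4) n t| ≤ K) :
    |quadratureError a b n f| ≤ (∫ x in a..b, |iteratedDeriv n f x|) * K := by
  have ha : a ∈ Icc a b := ⟨le_rfl, hab⟩
  have hb : b ∈ Icc a b := ⟨hab, le_rfl⟩
  have hc : (a + b) / 2 ∈ Icc a b := ⟨by linarith, by linarith⟩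
  have hg := hint n le_rfl
  have hleft := abs_integral_mul_le_mul_integral_abs
    (w := fun x ↦ peanoKernel ((b - a) / 4) n (x - a)) hc.1
    ((continuous_peanoKernel _ n).comp (continuous_sub_right a)).continuousOn
    (hg.mono_set_Icc ha hc) fun x hx ↦ hK (x - a) ⟨by linarith [hx.1], by linarith [hx.2]⟩
  have hright := abs_integral_mul_le_mul_integral_abs
    (w := fun x ↦ peanoKernel (-((b - a) / 4)) n (x - b)) (K := K) hc.2
    ((continuous_peanoKernel _ n).comp (continuous_sub_right b)).continuousOn
    (hg.mono_set_Icc hc hb) fun x hx ↦ by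
      rw [show x - b = -(b - x) by ring, peanoKernel_neg_neg, abs_mul, abs_pow, abs_neg, abs_one,
        one_pow, one_mul]
      exact hK (b - x) ⟨by linarith [hx.2], by linarith [hx.1]⟩
  rw [quadratureError_eq_peanoIntegral hab hint hftc hn le_rfl, abs_mul, abs_pow, abs_neg, abs_one,
    one_pow, one_mul, peanoIntegral, ← integral_add_adjacent_intervals
      (hg.mono_set_Icc ha hc).abs (hg.mono_set_Icc hc hb).abs]
  linarith [abs_add_le
    (∫ x in a..(a + b) / 2, peanoKernel ((b - a) / 4) n (x - a) * iteratedDeriv n f x)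
    (∫ x in (a + b) / 2..b, peanoKernel (-((b - a) / 4)) n (x - b) * iteratedDeriv n f x)]

end PeanoIdentity

theorem stmt18 (a b : ℝ) (n : ℕ) (f : ℝ → ℝ)
    (hab : a < b) (hn : 1 < n)
    (hd : ∀ k < n - 1, ∀ x ∈ Set.Icc a b,
      HasDerivAt (iteratedDeriv k f) (iteratedDeriv (k + 1) f x) x)
    (hcont : ContinuousOn (iteratedDeriv (n - 1) f) (Set.Icc a b))
    (hint : IntervalIntegrable (iteratedDeriv n f) volume a b)
    (hftc : ∀ x ∈ Set.Icc a b,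
      iteratedDeriv (n - 1) f x
        = iteratedDeriv (n - 1) f a + ∫ t in a..x, iteratedDeriv n f t)
    :
    (3 ≤ n →
      |(∫ x in a..b, f x)
        - (b - a) / 4 * (f a + 2 * f ((a + b) / 2) + f b)
        + ∑ i ∈ Finset.Icc 1 ((n - 1) / 2),
            (2 * (i : ℝ) - 1) * (b - a) ^ (2 * i + 1)
              / (((2 * i + 1).factorial : ℝ) * 2 ^ (2 * i + 1))
              * iteratedDeriv (2 * i) f ((a + b) / 2)|
        ≤ (∫ x in a..b, |iteratedDeriv n f x|)
          * (((n : ℝ) - 2) * (b - a) ^ n / ((n.factorial : ℝ) * 2 ^ (n + 1)))) ∧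
    (n = 2 →
      |(∫ x in a..b, f x)
        - (b - a) / 4 * (f a + 2 * f ((a + b) / 2) + f b)
        + ∑ i ∈ Finset.Icc 1 ((n - 1) / 2),
            (2 * (i : ℝ) - 1) * (b - a) ^ (2 * i + 1)
              / (((2 * i + 1).factorial : ℝ) * 2 ^ (2 * i + 1))
              * iteratedDeriv (2 * i) f ((a + b) / 2)|
        ≤ (∫ x in a..b, |iteratedDeriv n f x|) * ((b - a) ^ 2 / 32)) := by
  have hint' := intervalIntegrable_iteratedDeriv hab.le hd hcont hint
  have hftc' := iteratedDeriv_eq_add_integral hd hint' hftc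
  have hh : (b - a) / 2 = 2 * ((b - a) / 4) := by ring
  refine ⟨fun h3 ↦ ?_, fun h2 ↦ ?_⟩
  · refine abs_quadratureError_le hab.le hn.le hint' hftc' fun t ht ↦ ?_
    refine (abs_peanoKernel_le h3 (hh ▸ ht)).trans_eq ?_
    rw [← hh, div_pow, pow_succ]
    ring
  · subst h2
    exact abs_quadratureError_le hab.le hn.le hint' hftc' fun t ht ↦
      (abs_peanoKernel_two_le (hh ▸ ht)).trans_eq (by ring)
end
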